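/- Proposition (parabolic form of the subgroups Γ_I; equations (6.2) and (8B7)). With the notation and assumptions of the context, let I ⊆ {0,…,d+k−1}, put I₁ := I ∩ {0,…,d−1} and I₂' := {i − d : i ∈ I, i ≥ d} ⊆ {0,…,k−1}. Then: (a) if d−1 ∉ I₁, then Γ_I = ⟨σ_i : i ∈ I₁⟩ × G_{I₂'}, an internal direct product in Γ of the standard parabolic subgroup of W on the nodes I₁ with the subgroup G_{I₂'} of G; (b) if d−1 ∈ I₁, then Γ_I = ⟨σ_i, σ_H : i ∈ I₁∖{d−1}, H ∈ x₀·G_{I₂'}⟩ ⋊ G_{I₂'}, an internal semidirect product in Γ of the standard parabolic subgroup of W on the nodes (I₁∖{d−1}) ∪ (x₀·G_{I₂'}) with G_{I₂'}. In particular, for every j with d ≤ j ≤ d+k−1, ⟨R̂_0, …, R̂_j⟩ = ⟨σ_i, σ_H : 0 ≤ i ≤ d−2, H ∈ x₀·G_{{0,…,j−d}}⟩ ⋊ G_{{0,…,j−d}}. -/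

import Mathlib

noncomputable section

/-- The Coxeter matrix `𝒟` on the node set `B = {0,…,d−2} ⊔ V`: the string diagram of the
universal regular `d`-polytope `{q_1, …, q_{d−1}}` on the nodes `0, …, d−2`, extended by the
trivial diagram on `V`, with each node `H ∈ V` joined to the node `d−2` by a branch labelled
`q_{d−1}` (the label `0` stands for `∞`). -/
def coxMat (d v : ℕ) (q : ℕ → ℕ) (hq : ∀ m, q m = 0 ∨ 2 ≤ q m) :
    CoxeterMatrix (Fin (d - 1) ⊕ Fin v) where
  M := Matrix.of fun b b' =>
    match b, b' with
    | Sum.inl i, Sum.inl j =>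
        if i = j then 1
        else if (i : ℕ) + 1 = (j : ℕ) ∨ (j : ℕ) + 1 = (i : ℕ) then
          q (min (i : ℕ) (j : ℕ) + 1) else 2
    | Sum.inl i, Sum.inr _ => if (i : ℕ) = d - 2 then q (d - 1) else 2
    | Sum.inr _, Sum.inl i => if (i : ℕ) = d - 2 then q (d - 1) else 2
    | Sum.inr H, Sum.inr H' => if H = H' then 1 else 2
  isSymm := by
    ext b b'
    rcases b with i | H <;> rcases b' with j | H'
    · by_cases h : i = j
      · subst h; simp
      · simp only [Matrix.transpose_apply, Matrix.of_apply, if_neg h, if_neg (Ne.symm h)]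
        simp only [min_comm, or_comm]
    · rfl
    · rfl
    · by_cases h : H = H'
      · subst h; simp
      · simp only [Matrix.transpose_apply, Matrix.of_apply, if_neg h, if_neg (Ne.symm h)]
  diagonal := by
    intro b
    rcases b with i | H <;> simp
  off_diagonal := by
    intro b b' hbb'
    rcases b with i | H <;> rcases b' with j | H'
    · have h : i ≠ j := fun h => hbb' (by rw [h])
      simp only [Matrix.of_apply, if_neg h]
      by_cases h2 : (i : ℕ) + 1 = (j : ℕ) ∨ (j : ℕ) + 1 = (i : ℕ)
      · rw [if_pos h2]
        rcases hq (min (i : ℕ) (j : ℕ) + 1) with h3 | h3 <;> omega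
      · rw [if_neg h2]; omega
    · simp only [Matrix.of_apply]
      by_cases h2 : (i : ℕ) = d - 2
      · rw [if_pos h2]
        rcases hq (d - 1) with h3 | h3 <;> omega
      · rw [if_neg h2]; omega
    · simp only [Matrix.of_apply]
      by_cases h2 : (j : ℕ) = d - 2
      · rw [if_pos h2]
        rcases hq (d - 1) with h3 | h3 <;> omega
      · rw [if_neg h2]; omega
    · have h : H ≠ H' := fun h => hbb' (by rw [h])
      simp only [Matrix.of_apply, if_neg h]
      omega

open Pointwise

/-- `G_I = ⟨R_i : i ∈ I⟩`. -/
def GIg (k : ℕ) {G : Type*} [Group G] (R : Fin k → Subgroup G) (I : Set (Fin k)) : Subgroup G :=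
  ⨆ i ∈ I, R i

/-- The orbit `x₀ · G_I` of the base vertex `x₀` under `π(G_I)`. -/
def orbG (k v : ℕ) {G : Type*} [Group G] (π : G →* Equiv.Perm (Fin v))
    (R : Fin k → Subgroup G) (x₀ : Fin v) (I : Set (Fin k)) : Set (Fin v) :=
  {x | ∃ g ∈ GIg k R I, π g x₀ = x}

/-- The distinguished generating subgroups `R̂_0, …, R̂_{d+k−1}` of `Γ = W ⋊[α] G`:
`R̂_i = ⟨σ_i⟩` for `0 ≤ i ≤ d−2`, `R̂_{d−1} = ⟨σ_{x₀}⟩`, and `R̂_{d+i} = R_i` for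
`0 ≤ i ≤ k−1`. -/
def Rhat (d k v : ℕ) (q : ℕ → ℕ) (hq : ∀ m, q m = 0 ∨ 2 ≤ q m) (hd : 2 ≤ d)
    {G : Type*} [Group G] (α : G →* MulAut (coxMat d v q hq).Group)
    (R : Fin k → Subgroup G) (x₀ : Fin v) (i : Fin (d + k)) :
    Subgroup ((coxMat d v q hq).Group ⋊[α] G) :=
  if h : (i : ℕ) < d - 1 then
    Subgroup.closure {SemidirectProduct.inl ((coxMat d v q hq).simple (Sum.inl ⟨(i : ℕ), h⟩))}
  else if h2 : (i : ℕ) = d - 1 then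
    Subgroup.closure {SemidirectProduct.inl ((coxMat d v q hq).simple (Sum.inr x₀))}
  else
    Subgroup.map SemidirectProduct.inr (R ⟨(i : ℕ) - d, by have h3 := i.isLt; omega⟩)

/-- `Γ_I = ⟨R̂_i : i ∈ I⟩`. -/
def GammaIx (d k v : ℕ) (q : ℕ → ℕ) (hq : ∀ m, q m = 0 ∨ 2 ≤ q m) (hd : 2 ≤ d)
    {G : Type*} [Group G] (α : G →* MulAut (coxMat d v q hq).Group)
    (R : Fin k → Subgroup G) (x₀ : Fin v) (I : Set (Fin (d + k))) :
    Subgroup ((coxMat d v q hq).Group ⋊[α] G) :=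
  ⨆ i ∈ I, Rhat d k v q hq hd α R x₀ i

/-- The standard parabolic subgroup of the Coxeter group `W` on a set `S` of nodes. -/
def parab (d v : ℕ) (q : ℕ → ℕ) (hq : ∀ m, q m = 0 ∨ 2 ≤ q m)
    (S : Set (Fin (d - 1) ⊕ Fin v)) : Subgroup (coxMat d v q hq).Group :=
  Subgroup.closure ((coxMat d v q hq).simple '' S)

/-!
`Γ_I` is generated by the `σ_i` with `i ∈ I₁ ∖ {d−1}`, by `σ_{x₀}` when `d−1 ∈ I`, and by
`G_{I₂′}`. Since `g σ_{x₀} g⁻¹ = σ_{π(g) x₀}` in `Γ`, the `W`-part of `Γ_I` contains `σ_H` for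
every `H ∈ x₀·G_{I₂′}`, and the standard parabolic subgroup on these nodes is `α(G_{I₂′})`-stable,
hence normalised by `Γ_I`. In any semidirect product the images of the two factors meet
trivially; when `d−1 ∉ I` the group `G` fixes every `σ_i` with `i ≤ d−2`, so the two factors
commute.
-/

namespace SemidirectProduct

variable {N G : Type*} [Group N] [Group G] {φ : G →* MulAut N}

theorem map_inl_inf_map_inr_eq_bot (A : Subgroup N) (B : Subgroup G) :
    A.map (inl (φ := φ)) ⊓ B.map inr = ⊥ := by
  refine eq_bot_iff.2 fun x ⟨hxA, hxB⟩ => ?_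
  obtain ⟨n, -, rfl⟩ := hxA
  obtain ⟨g, -, hg⟩ := hxB
  obtain rfl : g = 1 := by simpa using congrArg right hg
  simpa using hg.symm

theorem commute_inl_inr {n : N} {g : G} (h : φ g n = n) :
    Commute (inl n : N ⋊[φ] G) (inr g) := by
  ext <;> simp [h]

theorem map_inl_sup_map_inr_le_normalizer {A : Subgroup N} {B : Subgroup G}
    (h : ∀ g ∈ B, ∀ n ∈ A, φ g n ∈ A) :
    A.map inl ⊔ B.map inr ≤ Subgroup.normalizer (A.map (inl (φ := φ)) : Set (N ⋊[φ] G)) := by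
  refine sup_le Subgroup.le_normalizer (Subgroup.le_normalizer_iff.2 ?_)
  rintro _ ⟨g, hg, rfl⟩ _ ⟨n, hn, rfl⟩
  rw [← map_inv, ← inl_aut]
  exact Subgroup.mem_map_of_mem _ (h g hg n hn)

end SemidirectProduct

open SemidirectProduct

section ParabolicForm

variable {d k v : ℕ} (hd : 2 ≤ d) {q : ℕ → ℕ} {hq : ∀ m, q m = 0 ∨ 2 ≤ q m}
  {G : Type*} [Group G] {R : Fin k → Subgroup G} {π : G →* Equiv.Perm (Fin v)} {x₀ : Fin v}
  {α : G →* MulAut (coxMat d v q hq).Group}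

local notation "σ" => CoxeterMatrix.simple (coxMat d v q hq)

/-- The paper's `I₁ ∖ {d−1}`, as nodes of the string diagram. -/
def coxeterNodes (I : Set (Fin (d + k))) : Set (Fin (d - 1)) :=
  {j | ∃ i ∈ I, (i : ℕ) = (j : ℕ)}

/-- The paper's `I₂′`. -/
def groupIndices (I : Set (Fin (d + k))) : Set (Fin k) :=
  {t | ∃ i ∈ I, (i : ℕ) = (t : ℕ) + d}

theorem coxeterNodes_setOf_le {j : Fin (d + k)} (hj : d ≤ (j : ℕ)) :
    coxeterNodes {i | i ≤ j} = Set.univ :=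
  Set.eq_univ_of_forall fun j' => ⟨⟨j', by omega⟩, Fin.le_def.2 (by dsimp only; omega), rfl⟩

theorem groupIndices_setOf_le {j : Fin (d + k)} (hj : d ≤ (j : ℕ)) :
    groupIndices {i | i ≤ j} = {t : Fin k | (t : ℕ) ≤ (j : ℕ) - d} := by
  ext t
  simp only [groupIndices, Set.mem_ofPred_eq, Fin.le_def]
  constructor
  · rintro ⟨i, hi, hit⟩
    omega
  · exact fun ht => ⟨Fin.natAdd d t, by simp only [Fin.val_natAdd]; omega, by simp [add_comm]⟩

theorem le_GIg {I : Set (Fin k)} {t : Fin k} (ht : t ∈ I) : R t ≤ GIg k R I :=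
  le_iSup₂ (f := fun t _ => R t) t ht

theorem self_mem_orbG (J : Set (Fin k)) : x₀ ∈ orbG k v π R x₀ J :=
  ⟨1, one_mem _, by simp⟩

theorem apply_mem_orbG {J : Set (Fin k)} {g : G} (hg : g ∈ GIg k R J) {x : Fin v}
    (hx : x ∈ orbG k v π R x₀ J) : π g x ∈ orbG k v π R x₀ J := by
  obtain ⟨g', hg', rfl⟩ := hx
  exact ⟨g * g', mul_mem hg hg', by simp⟩

theorem Rhat_of_lt (i : Fin (d + k)) (h : (i : ℕ) < d - 1) :
    Rhat d k v q hq hd α R x₀ i =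
      Subgroup.closure {inl (σ (Sum.inl ⟨i, h⟩))} :=
  dif_pos h

theorem Rhat_of_eq (i : Fin (d + k)) (h : (i : ℕ) = d - 1) :
    Rhat d k v q hq hd α R x₀ i =
      Subgroup.closure {inl (σ (Sum.inr x₀))} := by
  rw [Rhat, dif_neg (by omega), dif_pos h]

theorem Rhat_natAdd (t : Fin k) :
    Rhat d k v q hq hd α R x₀ (Fin.natAdd d t) = (R t).map inr := by
  have ht : d ≤ (Fin.natAdd d t : ℕ) := Nat.le_add_right d t
  rw [Rhat, dif_neg (by omega), dif_neg (by omega)]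
  congr
  simp

theorem Rhat_le_GammaIx {I : Set (Fin (d + k))} {i : Fin (d + k)} (hi : i ∈ I) :
    Rhat d k v q hq hd α R x₀ i ≤ GammaIx d k v q hq hd α R x₀ I :=
  le_iSup₂ (f := fun i _ => Rhat d k v q hq hd α R x₀ i) i hi

theorem map_inr_GIg_le_GammaIx {I : Set (Fin (d + k))} :
    (GIg k R (groupIndices I)).map inr ≤ GammaIx d k v q hq hd α R x₀ I := by
  refine Subgroup.map_le_iff_le_comap.2 (iSup₂_le fun t ⟨i, hi, hit⟩ => ?_)
  obtain rfl : i = Fin.natAdd d t := Fin.ext (by simp only [Fin.val_natAdd]; omega)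
  rw [← Subgroup.map_le_iff_le_comap, ← Rhat_natAdd hd]
  exact Rhat_le_GammaIx hd hi

theorem inl_simple_mem_GammaIx_of_mem_orbG
    (hα2 : ∀ (g : G) (H : Fin v), α g (σ (Sum.inr H)) = σ (Sum.inr (π g H)))
    {I : Set (Fin (d + k))} (hI : ∃ i ∈ I, (i : ℕ) = d - 1) {x : Fin v}
    (hx : x ∈ orbG k v π R x₀ (groupIndices I)) :
    inl (σ (Sum.inr x)) ∈ GammaIx d k v q hq hd α R x₀ I := by
  obtain ⟨i, hi, hid⟩ := hI
  obtain ⟨g, hg, rfl⟩ := hx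
  have hσx₀ : inl (σ (Sum.inr x₀)) ∈ GammaIx d k v q hq hd α R x₀ I :=
    Rhat_le_GammaIx hd hi (by rw [Rhat_of_eq hd i hid]; exact Subgroup.subset_closure rfl)
  have hg' : inr g ∈ GammaIx d k v q hq hd α R x₀ I :=
    map_inr_GIg_le_GammaIx hd (Subgroup.mem_map_of_mem _ hg)
  rw [← hα2, inl_aut, map_inv]
  exact mul_mem (mul_mem hg' hσx₀) (inv_mem hg')

theorem GammaIx_le_sup {I : Set (Fin (d + k))} {X : Set (Fin v)}
    (hx₀ : (∃ i ∈ I, (i : ℕ) = d - 1) → x₀ ∈ X) :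
    GammaIx d k v q hq hd α R x₀ I ≤
      (parab d v q hq (Sum.inl '' coxeterNodes I ∪ Sum.inr '' X)).map inl ⊔
        (GIg k R (groupIndices I)).map inr := by
  refine iSup₂_le fun i hi => ?_
  induction i using Fin.addCases with
  | left j =>
    rcases Nat.lt_or_eq_of_le (Nat.le_sub_one_of_lt j.isLt) with h | h
    · rw [Rhat_of_lt hd _ h, Subgroup.closure_le, Set.singleton_subset_iff]
      exact Subgroup.mem_sup_left (Subgroup.mem_map_of_mem _
        (Subgroup.subset_closure ⟨_, Or.inl ⟨_, ⟨_, hi, rfl⟩, rfl⟩, rfl⟩))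
    · rw [Rhat_of_eq hd _ h, Subgroup.closure_le, Set.singleton_subset_iff]
      exact Subgroup.mem_sup_left (Subgroup.mem_map_of_mem _
        (Subgroup.subset_closure ⟨_, Or.inr ⟨x₀, hx₀ ⟨_, hi, h⟩, rfl⟩, rfl⟩))
  | right t =>
    rw [Rhat_natAdd]
    exact le_sup_of_le_right (Subgroup.map_mono (le_GIg ⟨_, hi, by simp [add_comm]⟩))

theorem sup_le_GammaIx {I : Set (Fin (d + k))} {X : Set (Fin v)}
    (hX : ∀ x ∈ X, inl (σ (Sum.inr x)) ∈ GammaIx d k v q hq hd α R x₀ I) :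
    (parab d v q hq (Sum.inl '' coxeterNodes I ∪ Sum.inr '' X)).map inl ⊔
        (GIg k R (groupIndices I)).map inr ≤ GammaIx d k v q hq hd α R x₀ I := by
  refine sup_le ?_ (map_inr_GIg_le_GammaIx hd)
  rw [parab, MonoidHom.map_closure, Subgroup.closure_le]
  rintro _ ⟨_, ⟨b, hb, rfl⟩, rfl⟩
  rcases hb with ⟨j, ⟨i, hi, hij⟩, rfl⟩ | ⟨x, hx, rfl⟩
  · rw [show j = ⟨i, hij ▸ j.isLt⟩ from Fin.ext hij.symm]
    exact Rhat_le_GammaIx hd hi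
      (by rw [Rhat_of_lt hd i (hij ▸ j.isLt)]; exact Subgroup.subset_closure rfl)
  · exact hX x hx

theorem GammaIx_eq_sup {I : Set (Fin (d + k))} {X : Set (Fin v)}
    (hx₀ : (∃ i ∈ I, (i : ℕ) = d - 1) → x₀ ∈ X)
    (hX : ∀ x ∈ X, inl (σ (Sum.inr x)) ∈ GammaIx d k v q hq hd α R x₀ I) :
    GammaIx d k v q hq hd α R x₀ I =
      (parab d v q hq (Sum.inl '' coxeterNodes I ∪ Sum.inr '' X)).map inl ⊔
        (GIg k R (groupIndices I)).map inr :=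
  le_antisymm (GammaIx_le_sup hd hx₀) (sup_le_GammaIx hd hX)

theorem GammaIx_eq_sup_of_not_exists {I : Set (Fin (d + k))}
    (hI : ¬∃ i ∈ I, (i : ℕ) = d - 1) :
    GammaIx d k v q hq hd α R x₀ I =
      (parab d v q hq (Sum.inl '' coxeterNodes I)).map inl ⊔
        (GIg k R (groupIndices I)).map inr := by
  simpa only [Set.image_empty, Set.union_empty] using
    GammaIx_eq_sup hd (X := ∅) (absurd · hI) (by simp)

theorem GammaIx_eq_sup_of_exists
    (hα2 : ∀ (g : G) (H : Fin v), α g (σ (Sum.inr H)) = σ (Sum.inr (π g H)))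
    {I : Set (Fin (d + k))} (hI : ∃ i ∈ I, (i : ℕ) = d - 1) :
    GammaIx d k v q hq hd α R x₀ I =
      (parab d v q hq (Sum.inl '' coxeterNodes I ∪
          Sum.inr '' orbG k v π R x₀ (groupIndices I))).map inl ⊔
        (GIg k R (groupIndices I)).map inr :=
  GammaIx_eq_sup hd (fun _ => self_mem_orbG _)
    fun _ => inl_simple_mem_GammaIx_of_mem_orbG hd hα2 hI

theorem apply_eq_self_of_mem_parab
    (hα1 : ∀ (g : G) (i : Fin (d - 1)), α g (σ (Sum.inl i)) = σ (Sum.inl i))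
    (g : G) {T : Set (Fin (d - 1))} {w : (coxMat d v q hq).Group}
    (hw : w ∈ parab d v q hq (Sum.inl '' T)) : α g w = w :=
  MonoidHom.eqOn_closure (f := (α g).toMonoidHom) (g := MonoidHom.id _)
    (by rintro _ ⟨_, ⟨j, -, rfl⟩, rfl⟩; exact hα1 g j) hw

theorem apply_mem_parab_of_mem_GIg
    (hα1 : ∀ (g : G) (i : Fin (d - 1)), α g (σ (Sum.inl i)) = σ (Sum.inl i))
    (hα2 : ∀ (g : G) (H : Fin v), α g (σ (Sum.inr H)) = σ (Sum.inr (π g H)))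
    {T : Set (Fin (d - 1))} {J : Set (Fin k)} {g : G} (hg : g ∈ GIg k R J)
    {w : (coxMat d v q hq).Group}
    (hw : w ∈ parab d v q hq (Sum.inl '' T ∪ Sum.inr '' orbG k v π R x₀ J)) :
    α g w ∈ parab d v q hq (Sum.inl '' T ∪ Sum.inr '' orbG k v π R x₀ J) := by
  refine (Subgroup.closure_le
    (K := (parab d v q hq (Sum.inl '' T ∪ Sum.inr '' orbG k v π R x₀ J)).comap
      (α g).toMonoidHom)).2 ?_ hw
  rintro _ ⟨_, ⟨j, hj, rfl⟩ | ⟨x, hx, rfl⟩, rfl⟩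
  · exact Subgroup.subset_closure ⟨_, Or.inl ⟨j, hj, rfl⟩, (hα1 g j).symm⟩
  · exact Subgroup.subset_closure
      ⟨_, Or.inr ⟨_, apply_mem_orbG hg hx, rfl⟩, (hα2 g x).symm⟩

end ParabolicForm

theorem parabolic_form_of_GammaI_general (d k v : ℕ) (hd : 2 ≤ d)
    (q : ℕ → ℕ) (hq : ∀ m, q m = 0 ∨ 2 ≤ q m)
    {G : Type*} [Group G] (R : Fin k → Subgroup G)
    (π : G →* Equiv.Perm (Fin v))
    (x₀ : Fin v)
    (α : G →* MulAut (coxMat d v q hq).Group)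
    (hα1 : ∀ (g : G) (i : Fin (d - 1)),
      α g ((coxMat d v q hq).simple (Sum.inl i)) = (coxMat d v q hq).simple (Sum.inl i))
    (hα2 : ∀ (g : G) (H : Fin v),
      α g ((coxMat d v q hq).simple (Sum.inr H)) = (coxMat d v q hq).simple (Sum.inr (π g H)))
    (I : Set (Fin (d + k))) :
    -- (a): if `d−1 ∉ I₁`, then `Γ_I` is the internal direct product of the parabolic subgroup
    -- on the nodes `I₁` with `G_{I₂′}`
    ((¬ ∃ i ∈ I, (i : ℕ) = d - 1) →
      GammaIx d k v q hq hd α R x₀ I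
          = Subgroup.map (SemidirectProduct.inl (φ := α))
              (parab d v q hq (Sum.inl '' {j : Fin (d - 1) | ∃ i ∈ I, (i : ℕ) = (j : ℕ)})) ⊔
            Subgroup.map (SemidirectProduct.inr (φ := α))
              (GIg k R {t : Fin k | ∃ i ∈ I, (i : ℕ) = (t : ℕ) + d}) ∧
        Subgroup.map (SemidirectProduct.inl (φ := α))
              (parab d v q hq (Sum.inl '' {j : Fin (d - 1) | ∃ i ∈ I, (i : ℕ) = (j : ℕ)})) ⊓
            Subgroup.map (SemidirectProduct.inr (φ := α))
              (GIg k R {t : Fin k | ∃ i ∈ I, (i : ℕ) = (t : ℕ) + d}) = ⊥ ∧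
        ∀ w ∈ Subgroup.map (SemidirectProduct.inl (φ := α))
              (parab d v q hq (Sum.inl '' {j : Fin (d - 1) | ∃ i ∈ I, (i : ℕ) = (j : ℕ)})),
          ∀ g ∈ Subgroup.map (SemidirectProduct.inr (φ := α))
              (GIg k R {t : Fin k | ∃ i ∈ I, (i : ℕ) = (t : ℕ) + d}),
            Commute w g) ∧
    -- (b): if `d−1 ∈ I₁`, then `Γ_I` is the internal semidirect product of the parabolic
    -- subgroup on the nodes `(I₁ ∖ {d−1}) ∪ (x₀·G_{I₂′})` with `G_{I₂′}`
    ((∃ i ∈ I, (i : ℕ) = d - 1) →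
      GammaIx d k v q hq hd α R x₀ I
          = Subgroup.map (SemidirectProduct.inl (φ := α))
              (parab d v q hq (Sum.inl '' {j : Fin (d - 1) | ∃ i ∈ I, (i : ℕ) = (j : ℕ)} ∪
                Sum.inr '' orbG k v π R x₀ {t : Fin k | ∃ i ∈ I, (i : ℕ) = (t : ℕ) + d})) ⊔
            Subgroup.map (SemidirectProduct.inr (φ := α))
              (GIg k R {t : Fin k | ∃ i ∈ I, (i : ℕ) = (t : ℕ) + d}) ∧
        Subgroup.map (SemidirectProduct.inl (φ := α))
              (parab d v q hq (Sum.inl '' {j : Fin (d - 1) | ∃ i ∈ I, (i : ℕ) = (j : ℕ)} ∪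
                Sum.inr '' orbG k v π R x₀ {t : Fin k | ∃ i ∈ I, (i : ℕ) = (t : ℕ) + d})) ⊓
            Subgroup.map (SemidirectProduct.inr (φ := α))
              (GIg k R {t : Fin k | ∃ i ∈ I, (i : ℕ) = (t : ℕ) + d}) = ⊥ ∧
        ∀ x ∈ GammaIx d k v q hq hd α R x₀ I,
          ∀ w ∈ Subgroup.map (SemidirectProduct.inl (φ := α))
              (parab d v q hq (Sum.inl '' {j : Fin (d - 1) | ∃ i ∈ I, (i : ℕ) = (j : ℕ)} ∪
                Sum.inr '' orbG k v π R x₀ {t : Fin k | ∃ i ∈ I, (i : ℕ) = (t : ℕ) + d})),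
            x * w * x⁻¹ ∈ Subgroup.map (SemidirectProduct.inl (φ := α))
              (parab d v q hq (Sum.inl '' {j : Fin (d - 1) | ∃ i ∈ I, (i : ℕ) = (j : ℕ)} ∪
                Sum.inr '' orbG k v π R x₀ {t : Fin k | ∃ i ∈ I, (i : ℕ) = (t : ℕ) + d}))) ∧
    -- in particular: for `d ≤ j ≤ d+k−1`, `⟨R̂_0, …, R̂_j⟩` is the internal semidirect product
    -- of the parabolic subgroup on `{0,…,d−2} ∪ (x₀·G_{{0,…,j−d}})` with `G_{{0,…,j−d}}`
    (∀ j : Fin (d + k), d ≤ (j : ℕ) →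
      GammaIx d k v q hq hd α R x₀ {i : Fin (d + k) | i ≤ j}
          = Subgroup.map (SemidirectProduct.inl (φ := α))
              (parab d v q hq ((Set.range Sum.inl) ∪
                Sum.inr '' orbG k v π R x₀ {t : Fin k | (t : ℕ) ≤ (j : ℕ) - d})) ⊔
            Subgroup.map (SemidirectProduct.inr (φ := α))
              (GIg k R {t : Fin k | (t : ℕ) ≤ (j : ℕ) - d})) := by
  refine ⟨fun hnot => ⟨GammaIx_eq_sup_of_not_exists hd hnot, map_inl_inf_map_inr_eq_bot _ _, ?_⟩,
    fun hyes => ⟨GammaIx_eq_sup_of_exists hd hα2 hyes, map_inl_inf_map_inr_eq_bot _ _, ?_⟩,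
    fun j hj => ?_⟩
  · rintro _ ⟨w, hw, rfl⟩ _ ⟨g, -, rfl⟩
    exact commute_inl_inr (apply_eq_self_of_mem_parab hα1 g hw)
  · rw [GammaIx_eq_sup_of_exists hd hα2 hyes]
    exact Subgroup.le_normalizer_iff.1 (map_inl_sup_map_inr_le_normalizer
      fun _ hg _ hw => apply_mem_parab_of_mem_GIg hα1 hα2 hg hw)
  · have hj₁ : ∃ i ∈ {i : Fin (d + k) | i ≤ j}, (i : ℕ) = d - 1 :=
      ⟨⟨d - 1, by omega⟩, Fin.le_def.2 (by dsimp only; omega), rfl⟩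
    have := GammaIx_eq_sup_of_exists (R := R) (x₀ := x₀) hd hα2 hj₁
    rwa [coxeterNodes_setOf_le hj, groupIndices_setOf_le hj, Set.image_univ] at this

/-- Proposition (equations (6.2) and (8B7)): parabolic form of the subgroups `Γ_I` of
`Γ = W ⋊[α] G`.  With `I₁ = I ∩ {0,…,d−1}` and `I₂′ = {i − d : i ∈ I, i ≥ d}`:
(a) if `d−1 ∉ I₁` then `Γ_I` is the internal direct product of the standard parabolic subgroup
of `W` on the nodes `I₁` with `G_{I₂′}`; (b) if `d−1 ∈ I₁` then `Γ_I` is the internal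
semidirect product of the standard parabolic subgroup of `W` on the nodes
`(I₁ ∖ {d−1}) ∪ (x₀·G_{I₂′})` with `G_{I₂′}`.  In particular, for `d ≤ j ≤ d+k−1`,
`⟨R̂_0, …, R̂_j⟩` is the internal semidirect product of the parabolic subgroup on the nodes
`{0,…,d−2} ∪ (x₀·G_{{0,…,j−d}})` with `G_{{0,…,j−d}}`. -/
theorem parabolic_form_of_GammaI (d k v : ℕ) (hd : 2 ≤ d) (hk : 1 ≤ k) (hv : 1 ≤ v)
    (q : ℕ → ℕ) (hq : ∀ m, q m = 0 ∨ 2 ≤ q m)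
    {G : Type*} [Group G] (R : Fin k → Subgroup G)
    (hGgen : (⨆ i : Fin k, R i) = ⊤)
    (π : G →* Equiv.Perm (Fin v))
    (htrans : ∀ x y : Fin v, ∃ g : G, π g x = y)
    (x₀ : Fin v)
    (hGint : ∀ I J : Set (Fin k), GIg k R I ⊓ GIg k R J = GIg k R (I ∩ J))
    (hfixx : ∀ g ∈ GIg k R {i : Fin k | (i : ℕ) ≠ 0}, π g x₀ = x₀)
    (horb : ∀ I J : Set (Fin k),
      orbG k v π R x₀ I ∩ orbG k v π R x₀ J = orbG k v π R x₀ (I ∩ J))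
    (hpar : ∀ B₁ B₂ : Set (Fin (d - 1) ⊕ Fin v),
      Subgroup.closure ((coxMat d v q hq).simple '' B₁) ⊓
          Subgroup.closure ((coxMat d v q hq).simple '' B₂)
        = Subgroup.closure ((coxMat d v q hq).simple '' (B₁ ∩ B₂)))
    (α : G →* MulAut (coxMat d v q hq).Group)
    (hα1 : ∀ (g : G) (i : Fin (d - 1)),
      α g ((coxMat d v q hq).simple (Sum.inl i)) = (coxMat d v q hq).simple (Sum.inl i))
    (hα2 : ∀ (g : G) (H : Fin v),
      α g ((coxMat d v q hq).simple (Sum.inr H)) = (coxMat d v q hq).simple (Sum.inr (π g H)))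
    (I : Set (Fin (d + k))) :
    -- (a): if `d−1 ∉ I₁`, then `Γ_I` is the internal direct product of the parabolic subgroup
    -- on the nodes `I₁` with `G_{I₂′}`
    ((¬ ∃ i ∈ I, (i : ℕ) = d - 1) →
      GammaIx d k v q hq hd α R x₀ I
          = Subgroup.map (SemidirectProduct.inl (φ := α))
              (parab d v q hq (Sum.inl '' {j : Fin (d - 1) | ∃ i ∈ I, (i : ℕ) = (j : ℕ)})) ⊔
            Subgroup.map (SemidirectProduct.inr (φ := α))
              (GIg k R {t : Fin k | ∃ i ∈ I, (i : ℕ) = (t : ℕ) + d}) ∧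
        Subgroup.map (SemidirectProduct.inl (φ := α))
              (parab d v q hq (Sum.inl '' {j : Fin (d - 1) | ∃ i ∈ I, (i : ℕ) = (j : ℕ)})) ⊓
            Subgroup.map (SemidirectProduct.inr (φ := α))
              (GIg k R {t : Fin k | ∃ i ∈ I, (i : ℕ) = (t : ℕ) + d}) = ⊥ ∧
        ∀ w ∈ Subgroup.map (SemidirectProduct.inl (φ := α))
              (parab d v q hq (Sum.inl '' {j : Fin (d - 1) | ∃ i ∈ I, (i : ℕ) = (j : ℕ)})),
          ∀ g ∈ Subgroup.map (SemidirectProduct.inr (φ := α))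
              (GIg k R {t : Fin k | ∃ i ∈ I, (i : ℕ) = (t : ℕ) + d}),
            Commute w g) ∧
    -- (b): if `d−1 ∈ I₁`, then `Γ_I` is the internal semidirect product of the parabolic
    -- subgroup on the nodes `(I₁ ∖ {d−1}) ∪ (x₀·G_{I₂′})` with `G_{I₂′}`
    ((∃ i ∈ I, (i : ℕ) = d - 1) →
      GammaIx d k v q hq hd α R x₀ I
          = Subgroup.map (SemidirectProduct.inl (φ := α))
              (parab d v q hq (Sum.inl '' {j : Fin (d - 1) | ∃ i ∈ I, (i : ℕ) = (j : ℕ)} ∪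
                Sum.inr '' orbG k v π R x₀ {t : Fin k | ∃ i ∈ I, (i : ℕ) = (t : ℕ) + d})) ⊔
            Subgroup.map (SemidirectProduct.inr (φ := α))
              (GIg k R {t : Fin k | ∃ i ∈ I, (i : ℕ) = (t : ℕ) + d}) ∧
        Subgroup.map (SemidirectProduct.inl (φ := α))
              (parab d v q hq (Sum.inl '' {j : Fin (d - 1) | ∃ i ∈ I, (i : ℕ) = (j : ℕ)} ∪
                Sum.inr '' orbG k v π R x₀ {t : Fin k | ∃ i ∈ I, (i : ℕ) = (t : ℕ) + d})) ⊓
            Subgroup.map (SemidirectProduct.inr (φ := α))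
              (GIg k R {t : Fin k | ∃ i ∈ I, (i : ℕ) = (t : ℕ) + d}) = ⊥ ∧
        ∀ x ∈ GammaIx d k v q hq hd α R x₀ I,
          ∀ w ∈ Subgroup.map (SemidirectProduct.inl (φ := α))
              (parab d v q hq (Sum.inl '' {j : Fin (d - 1) | ∃ i ∈ I, (i : ℕ) = (j : ℕ)} ∪
                Sum.inr '' orbG k v π R x₀ {t : Fin k | ∃ i ∈ I, (i : ℕ) = (t : ℕ) + d})),
            x * w * x⁻¹ ∈ Subgroup.map (SemidirectProduct.inl (φ := α))
              (parab d v q hq (Sum.inl '' {j : Fin (d - 1) | ∃ i ∈ I, (i : ℕ) = (j : ℕ)} ∪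
                Sum.inr '' orbG k v π R x₀ {t : Fin k | ∃ i ∈ I, (i : ℕ) = (t : ℕ) + d}))) ∧
    -- in particular: for `d ≤ j ≤ d+k−1`, `⟨R̂_0, …, R̂_j⟩` is the internal semidirect product
    -- of the parabolic subgroup on `{0,…,d−2} ∪ (x₀·G_{{0,…,j−d}})` with `G_{{0,…,j−d}}`
    (∀ j : Fin (d + k), d ≤ (j : ℕ) →
      GammaIx d k v q hq hd α R x₀ {i : Fin (d + k) | i ≤ j}
          = Subgroup.map (SemidirectProduct.inl (φ := α))
              (parab d v q hq ((Set.range Sum.inl) ∪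
                Sum.inr '' orbG k v π R x₀ {t : Fin k | (t : ℕ) ≤ (j : ℕ) - d})) ⊔
            Subgroup.map (SemidirectProduct.inr (φ := α))
              (GIg k R {t : Fin k | (t : ℕ) ≤ (j : ℕ) - d})) :=
  parabolic_form_of_GammaI_general d k v hd q hq R π x₀ α hα1 hα2 I
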